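/- Let a loopless digraph on n vertices with m pairwise distinct edges be given by an injective map e : Fin m → Fin n × Fin n with (e k).1 ≠ (e k).2 for all k, with incidence matrix B and initial-incidence matrix B^i. Suppose z ∈ {0,1}^m is nonzero, satisfies B z = 0 and B^i z ≤ 1 entrywise, and z cannot be written as z = z₁ + z₂ with z₁, z₂ ∈ {0,1}^m both nonzero and B z₁ = B z₂ = 0. Then the support of z is the edge set of a directed simple cycle: there exist l ≥ 2 and injective maps v : Fin l → Fin n and c : Fin l → Fin m with e(c t) = (v t, v (t+1 mod l)) for all t, such that z_k = 1 if and only if k is in the range of c. -/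

import Mathlib

/-- The incidence matrix of a digraph on `n` vertices with edge map `e`:
`B(v,k) = 1` if `v` is the initial vertex of edge `k`, `−1` if it is the terminal
vertex, and `0` otherwise. -/
def Bmat (n m : ℕ) (e : Fin m → Fin n × Fin n) : Matrix (Fin n) (Fin m) ℤ :=
  fun v k => if v = (e k).1 then 1 else if v = (e k).2 then -1 else 0

/-- The initial-incidence matrix: `Bⁱ(v,k) = 1` if `v` is the initial vertex of edge `k`,
and `0` otherwise. -/
def Bimat (n m : ℕ) (e : Fin m → Fin n × Fin n) : Matrix (Fin n) (Fin m) ℤ :=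
  fun v k => if v = (e k).1 then 1 else 0

/-!
On the support `S` of `z`, the conditions `B z = 0` and `Bⁱ z ≤ 1` say that every vertex has
in-degree equal to out-degree, and both are at most one. Hence "the edge leaving the head of `k`"
is an injective self-map of the finite set `S`, i.e. a permutation. The orbit of any edge of `S`
under it is a directed simple cycle (of length at least two, as there are no loops), whose
indicator vector is again in the kernel of `B`. Were the orbit smaller than `S`, it would split
`z` into two nonzero `{0,1}`-vectors in the kernel of `B`.
-/

open Function Matrix

section FiberMatrix

variable {V E ι : Type*} [Fintype E] [DecidableEq V]

/-- `Bimat n m e` is definitionally `fiberMatrix fun k => (e k).1`; the terminal-incidence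
matrix is `fiberMatrix fun k => (e k).2`. -/
def fiberMatrix (f : E → V) : Matrix V E ℤ :=
  fun v k => if v = f k then 1 else 0

lemma fiberMatrix_mulVec_apply (f : E → V) (z : E → ℤ) (v : V) :
    (fiberMatrix f *ᵥ z) v = ∑ k with f k = v, z k := by
  simp [fiberMatrix, mulVec, dotProduct, Finset.sum_filter, eq_comm]

lemma injOn_of_fiberMatrix_mulVec_le_one {f : E → V} {z : E → ℤ}
    (hz : ∀ k, z k = 0 ∨ z k = 1) (h : ∀ v, (fiberMatrix f *ᵥ z) v ≤ 1) :
    Set.InjOn f {k | z k = 1} := by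
  classical
  intro a ha b hb hab
  by_contra hne
  have hpair : ∑ k ∈ {a, b}, z k ≤ ∑ k with f k = f a, z k :=
    Finset.sum_le_sum_of_subset_of_nonneg (by simp [Finset.insert_subset_iff, hab])
      fun k _ _ => by rcases hz k with h | h <;> simp [h]
  have hle := h (f a)
  rw [fiberMatrix_mulVec_apply] at hle
  rw [Finset.sum_pair hne, ha, hb] at hpair
  omega

lemma fiberMatrix_mulVec_pos {f : E → V} {z : E → ℤ} (hz : ∀ k, 0 ≤ z k) {k : E}
    (hk : z k = 1) : 0 < (fiberMatrix f *ᵥ z) (f k) := by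
  rw [fiberMatrix_mulVec_apply]
  exact Int.one_pos.trans_le <| hk ▸
    Finset.single_le_sum (fun j _ => hz j) (Finset.mem_filter.2 ⟨Finset.mem_univ k, rfl⟩)

lemma exists_mem_support_of_fiberMatrix_mulVec_pos {f : E → V} {z : E → ℤ}
    (hz : ∀ k, z k = 0 ∨ z k = 1) {v : V} (h : 0 < (fiberMatrix f *ᵥ z) v) :
    ∃ k, z k = 1 ∧ f k = v := by
  rw [fiberMatrix_mulVec_apply] at h
  obtain ⟨k, hk, hzk⟩ := Finset.exists_ne_zero_of_sum_ne_zero h.ne'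
  exact ⟨k, (hz k).resolve_left hzk, (Finset.mem_filter.1 hk).2⟩

lemma fiberMatrix_mulVec_indicator_range [Fintype ι] [DecidableEq E] {c : ι → E}
    (hc : Injective c) (f : E → V) (v : V) :
    (fiberMatrix f *ᵥ (Set.range c).indicator 1) v = ∑ t, if v = f (c t) then 1 else 0 := by
  have hrange : Set.range c = ↑(Finset.univ.image c) := by simp
  simp only [mulVec, dotProduct, ← Set.indicator_mul_right, hrange,
    Finset.sum_indicator_subset _ (Finset.subset_univ _), Finset.sum_image hc.injOn]
  simp [fiberMatrix]

end FiberMatrix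

def cycleSucc {l : ℕ} (t : Fin l) : Fin l :=
  ⟨(t.1 + 1) % l, Nat.mod_lt _ t.pos⟩

lemma cycleSucc_bijective (l : ℕ) : Bijective (cycleSucc : Fin l → Fin l) := by
  convert (finRotate l).bijective
  ext t
  simp [cycleSucc, finRotate_apply, Fin.val_add]

section Digraph

variable {n m : ℕ} {e : Fin m → Fin n × Fin n}

lemma Bmat_eq_sub (hloop : ∀ k, (e k).1 ≠ (e k).2) :
    Bmat n m e = fiberMatrix (fun k => (e k).1) - fiberMatrix (fun k => (e k).2) := by
  ext u k
  have hk := hloop k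
  simp only [Bmat, fiberMatrix, Matrix.sub_apply]
  split_ifs <;> subst_vars <;> simp_all [eq_comm]

lemma fiberMatrix_snd_mulVec_eq (hloop : ∀ k, (e k).1 ≠ (e k).2) {z : Fin m → ℤ}
    (hBz : Bmat n m e *ᵥ z = 0) :
    fiberMatrix (fun k => (e k).2) *ᵥ z = Bimat n m e *ᵥ z := by
  rw [Bmat_eq_sub hloop, sub_mulVec, sub_eq_zero] at hBz
  exact hBz.symm

lemma Bmat_mulVec_indicator_cycle (hloop : ∀ k, (e k).1 ≠ (e k).2) {l : ℕ}
    {v : Fin l → Fin n} {c : Fin l → Fin m} (hc : Injective c)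
    (hedge : ∀ t, e (c t) = (v t, v (cycleSucc t))) :
    Bmat n m e *ᵥ (Set.range c).indicator 1 = 0 := by
  ext u
  rw [Bmat_eq_sub hloop, sub_mulVec, Pi.sub_apply, fiberMatrix_mulVec_indicator_range hc,
    fiberMatrix_mulVec_indicator_range hc, Pi.zero_apply, sub_eq_zero]
  simp only [hedge]
  exact ((cycleSucc_bijective l).sum_comp fun t => if u = v t then 1 else 0).symm

lemma exists_cycle_in_support (hloop : ∀ k, (e k).1 ≠ (e k).2) {z : Fin m → ℤ}
    (hz01 : ∀ k, z k = 0 ∨ z k = 1) (hzne : z ≠ 0) (hBz : Bmat n m e *ᵥ z = 0)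
    (hBi : ∀ u, (Bimat n m e *ᵥ z) u ≤ 1) :
    ∃ (l : ℕ) (_ : 2 ≤ l) (v : Fin l → Fin n) (c : Fin l → Fin m),
      Injective v ∧ Injective c ∧ (∀ t, e (c t) = (v t, v (cycleSucc t))) ∧
      ∀ t, z (c t) = 1 := by
  have hbal := fiberMatrix_snd_mulVec_eq hloop hBz
  have hfst : Set.InjOn (fun k => (e k).1) {k | z k = 1} :=
    injOn_of_fiberMatrix_mulVec_le_one hz01 hBi
  have hsnd : Set.InjOn (fun k => (e k).2) {k | z k = 1} :=
    injOn_of_fiberMatrix_mulVec_le_one hz01 (hbal ▸ hBi)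
  have hsucc (k : {k // z k = 1}) : ∃ k' : {k // z k = 1}, (e k').1 = (e k).2 := by
    have hpos := fiberMatrix_mulVec_pos (f := fun k => (e k).2)
      (fun j => by rcases hz01 j with h | h <;> simp [h]) k.2
    rw [hbal] at hpos
    obtain ⟨k', hk', h⟩ := exists_mem_support_of_fiberMatrix_mulVec_pos hz01 hpos
    exact ⟨⟨k', hk'⟩, h⟩
  choose σ hσ using hsucc
  have hσinj : Injective σ := fun a b h =>
    Subtype.ext (hsnd a.2 b.2 (by simp only [← hσ, h]))
  obtain ⟨k₀, hk₀⟩ : ∃ k, z k = 1 := by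
    obtain ⟨k, hk⟩ := ne_iff.1 hzne
    exact ⟨k, (hz01 k).resolve_left hk⟩
  set x₀ : {k // z k = 1} := ⟨k₀, hk₀⟩
  have hl : 0 < minimalPeriod σ x₀ :=
    minimalPeriod_pos_of_mem_periodicPts (hσinj.mem_periodicPts x₀)
  have hl1 : minimalPeriod σ x₀ ≠ 1 := fun h =>
    hloop k₀ (by rw [← hσ x₀, minimalPeriod_eq_one_iff_isFixedPt.1 h])
  have hc : Injective fun t : Fin (minimalPeriod σ x₀) => (σ^[t] x₀ : Fin m) := fun a b h =>
    Fin.ext (iterate_injOn_Iio_minimalPeriod a.2 b.2 (Subtype.ext h))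
  refine ⟨minimalPeriod σ x₀, by omega, fun t => (e (σ^[t] x₀)).1, _, fun a b h => hc ?_, hc,
    fun t => Prod.ext rfl ?_, fun t => (σ^[t] x₀).2⟩
  · exact hfst (σ^[a] x₀).2 (σ^[b] x₀).2 h
  · dsimp only [cycleSucc]
    rw [iterate_mod_minimalPeriod_eq, iterate_succ_apply', hσ]

end Digraph

/-- in a loopless digraph with pairwise distinct edges, if a nonzero
`z ∈ {0,1}^m` satisfies `B z = 0` and `Bⁱ z ≤ 1` entrywise, and `z` is not a sum of two
nonzero `{0,1}`-vectors each in the kernel of `B`, then the support of `z` is the edge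
set of a directed simple cycle. -/
theorem support_is_simple_cycle (n m : ℕ)
    (e : Fin m → Fin n × Fin n)
    (hloop : ∀ k, (e k).1 ≠ (e k).2)
    (z : Fin m → ℤ) (hz01 : ∀ k, z k = 0 ∨ z k = 1) (hzne : z ≠ 0)
    (hBz : (Bmat n m e).mulVec z = 0)
    (hBi : ∀ u : Fin n, (Bimat n m e).mulVec z u ≤ 1)
    (hind : ¬ ∃ z₁ z₂ : Fin m → ℤ,
      (∀ k, z₁ k = 0 ∨ z₁ k = 1) ∧ (∀ k, z₂ k = 0 ∨ z₂ k = 1) ∧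
      z₁ ≠ 0 ∧ z₂ ≠ 0 ∧ z = z₁ + z₂ ∧
      (Bmat n m e).mulVec z₁ = 0 ∧ (Bmat n m e).mulVec z₂ = 0) :
    ∃ (l : ℕ) (hl : 2 ≤ l) (v : Fin l → Fin n) (c : Fin l → Fin m),
      Function.Injective v ∧ Function.Injective c ∧
      (∀ t : Fin l, e (c t) = (v t, v ⟨(t.1 + 1) % l, Nat.mod_lt _ (by omega)⟩)) ∧
      (∀ k, z k = 1 ↔ ∃ t, c t = k) := by
  obtain ⟨l, hl, v, c, hv, hc, hedge, hcz⟩ := exists_cycle_in_support hloop hz01 hzne hBz hBi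
  refine ⟨l, hl, v, c, hv, hc, hedge, fun k => ⟨fun hk => ?_, by rintro ⟨t, rfl⟩; exact hcz t⟩⟩
  by_contra hkc
  set z₁ := (Set.range c).indicator (1 : Fin m → ℤ)
  have hz₁ (j : Fin m) : z₁ j = if ∃ t, c t = j then 1 else 0 := by
    simp [z₁, Set.indicator_apply]
  have hBz₁ := Bmat_mulVec_indicator_cycle hloop hc hedge
  refine hind ⟨z₁, z - z₁, fun j => ?_, fun j => ?_, fun h => ?_, fun h => ?_,
    (add_sub_cancel _ _).symm, hBz₁, by rw [mulVec_sub, hBz, hBz₁, sub_zero]⟩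
  · rw [hz₁]; split_ifs <;> simp
  · rw [Pi.sub_apply, hz₁]
    split_ifs with hj
    · obtain ⟨t, rfl⟩ := hj; simp [hcz t]
    · simpa using hz01 j
  · simpa [hz₁] using congrFun h (c ⟨0, by omega⟩)
  · simpa [hz₁, hk, hkc] using congrFun h k
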